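/- arXiv:2601.19195 — 4 statements merged into one kernel-verified Lean document; each statement's English description precedes it below -/
import Mathlib

section
/- The polynomial identity x₁²y₁² + x₂²y₂² + x₃²y₃² + x₁²y₂² + x₂²y₃² + x₃²y₁² + x₁²y₂² + x₂²y₁² equals the sum of the six squares (x₁y₁/2 + x₂y₃ + (√3/2)x₁y₂)² + (x₂y₁/2 + x₁y₃ − (√3/2)x₂y₂)² + ((√3/2)x₁y₁ − x₁y₂/2)² + (x₂y₂/2 + (√3/2)x₂y₁)² + (x₃y₁)² + (x₃y₃)² — i.e., P₊ = P_{3,3,6} + (x₁y₃ + x₂y₁)² admits an SOS decomposition into 6 squares of bilinear forms. -/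
/-- `P₊ = P_{3,3,6} + (x₁y₃ + x₂y₁)²` equals an explicit sum of six
squares of bilinear forms. -/
theorem Pplus_six_squares (x₁ x₂ x₃ y₁ y₂ y₃ : ℝ) :
    (x₁^2*y₁^2 + x₂^2*y₂^2 + x₃^2*y₃^2 + x₁^2*y₂^2 + x₂^2*y₃^2 + x₃^2*y₁^2)
      + (x₁*y₃ + x₂*y₁)^2 =
    (x₁*y₁/2 + x₂*y₃ + (Real.sqrt 3 / 2) * (x₁*y₂))^2
      + (x₂*y₁/2 + x₁*y₃ - (Real.sqrt 3 / 2) * (x₂*y₂))^2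
      + ((Real.sqrt 3 / 2) * (x₁*y₁) - x₁*y₂/2)^2
      + (x₂*y₂/2 + (Real.sqrt 3 / 2) * (x₂*y₁))^2
      + (x₃*y₁)^2 + (x₃*y₃)^2 := by
  have h : Real.sqrt 3 ^ 2 = 3 := Real.sq_sqrt (by norm_num)
  linear_combination (-(x₁^2*y₁^2 + x₁^2*y₂^2 + x₂^2*y₁^2 + x₂^2*y₂^2)/4) * h
end

section
/- Let m ≥ 3 and suppose the biquadratic form P(x,y) = Σ_{i=1}^m x_i²y_i² + Σ_{i=1}^m x_i²y_{i+1}² (indices mod m) is written as a sum of R squares of bilinear forms L_t(x,y) = Σ_{i,j} c_{ij}^{(t)} x_i y_j. Then R ≥ 2m. Consequently the SOS rank of P equals 2m. -/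
/-- `c` gives an SOS decomposition of the biquadratic form `P` into `R` squares
of bilinear forms. -/
def IsSOSDecomp (m n R : ℕ) (P : (Fin m → ℝ) → (Fin n → ℝ) → ℝ)
    (c : Fin R → Fin m → Fin n → ℝ) : Prop :=
  ∀ x y, P x y = ∑ t, (∑ i, ∑ j, c t i j * x i * y j)^2

/-- The SOS rank: the minimal number of squares of bilinear forms summing to `P`. -/
noncomputable def sosRank (m n : ℕ) (P : (Fin m → ℝ) → (Fin n → ℝ) → ℝ) : ℕ :=
  sInf {R | ∃ c : Fin R → Fin m → Fin n → ℝ, IsSOSDecomp m n R P c}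

/-- The cyclic form `P_{m,m,2m}(x,y) = Σ x_i²y_i² + Σ x_i²y_{i+1}²` (indices mod m). -/
def Pcyclic (m : ℕ) (hm : 0 < m) : (Fin m → ℝ) → (Fin m → ℝ) → ℝ :=
  fun x y => (∑ i, (x i)^2 * (y i)^2) +
    ∑ i, (x i)^2 * (y ⟨(i.val + 1) % m, Nat.mod_lt _ hm⟩)^2

/-!
Write a decomposition as `P(x, y) = ‖∑ᵢⱼ xᵢ yⱼ vᵢⱼ‖²` with `vᵢⱼ ∈ ℝ^R`, and let
`P(x, y) = ∑ᵢⱼ Aᵢⱼ xᵢ² yⱼ²`. Then `‖vᵢⱼ‖² = Aᵢⱼ`, and since `P` does not change when one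
coordinate of `x` or of `y` changes sign, polarization gives `v_ab ⟂ v_ab'`, `v_ab ⟂ v_a'b` and
`⟪v_ab, v_a'b'⟫ = -⟪v_ab', v_a'b⟫`. If the support of `A` contains no `2 × 2` rectangle, the last
product vanishes as soon as `A_ab, A_a'b' ≠ 0`, so the `vᵢⱼ` over the support of `A` are nonzero
and pairwise orthogonal: there are at most `R` of them, and for `A ≥ 0` the squares of the
monomials `√Aᵢⱼ xᵢ yⱼ` attain this count. For the cyclic form, `A = 1 + C` with `C` the matrix
of the cyclic shift, whose support has `2m` entries and is rectangle-free because for `m ≥ 3`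
the shift has no point of period `2`.
-/

open Matrix

section DotProduct

variable {ι : Type*}

lemma dotProduct_eq_zero_of_add_self_eq_sub_self [Fintype ι] {p q : ι → ℝ}
    (h : (p + q) ⬝ᵥ (p + q) = (p - q) ⬝ᵥ (p - q)) : p ⬝ᵥ q = 0 := by
  simp only [add_dotProduct, dotProduct_add, sub_dotProduct, dotProduct_sub] at h
  linarith [dotProduct_comm p q]

lemma linearIndependent_of_dotProduct_eq_zero [Fintype ι] {κ : Type*} {v : κ → ι → ℝ}
    (hz : ∀ k, v k ≠ 0) (ho : Pairwise fun k l => v k ⬝ᵥ v l = 0) : LinearIndependent ℝ v := by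
  refine RCLike.linearIndependent_of_ne_zero_of_wInner_one_eq_zero hz ?_
  simpa [RCLike.wInner_one_eq_sum, dotProduct, mul_comm] using ho

lemma single_sub_single_sq [DecidableEq ι] {a a' : ι} (h : a ≠ a') :
    (Pi.single a 1 - Pi.single a' 1 : ι → ℝ) ^ 2 = (Pi.single a 1 + Pi.single a' 1) ^ 2 := by
  ext i
  by_cases hi : i = a <;> by_cases hi' : i = a' <;> simp_all

end DotProduct

variable {m n R : ℕ}

def diagBiquadForm (A : Matrix (Fin m) (Fin n) ℝ) (x : Fin m → ℝ) (y : Fin n → ℝ) : ℝ :=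
  x ^ 2 ⬝ᵥ A *ᵥ y ^ 2

lemma diagBiquadForm_eq_sum (A : Matrix (Fin m) (Fin n) ℝ) (x : Fin m → ℝ) (y : Fin n → ℝ) :
    diagBiquadForm A x y = ∑ p : Fin m × Fin n, A p.1 p.2 * x p.1 ^ 2 * y p.2 ^ 2 := by
  simp [diagBiquadForm, dotProduct, mulVec, Finset.mul_sum, Fintype.sum_prod_type, mul_assoc,
    mul_left_comm]

def IsRectangleFree (A : Matrix (Fin m) (Fin n) ℝ) : Prop :=
  ∀ ⦃a a' b b'⦄, a ≠ a' → b ≠ b' → A a b ≠ 0 → A a' b' ≠ 0 → A a b' = 0 ∨ A a' b = 0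

section Decomposition

variable {c : Fin R → Fin m → Fin n → ℝ}

variable (c) in
def bilinVec (x : Fin m → ℝ) (y : Fin n → ℝ) : Fin R → ℝ :=
  fun t => ∑ i, ∑ j, c t i j * x i * y j

variable (c) in
def coeffVec (a : Fin m) (b : Fin n) : Fin R → ℝ :=
  fun t => c t a b

lemma bilinVec_add_left (x x' y) : bilinVec c (x + x') y = bilinVec c x y + bilinVec c x' y := by
  ext t; simp [bilinVec, mul_add, add_mul, Finset.sum_add_distrib]

lemma bilinVec_sub_left (x x' y) : bilinVec c (x - x') y = bilinVec c x y - bilinVec c x' y := by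
  ext t; simp [bilinVec, mul_sub, sub_mul, Finset.sum_sub_distrib]

lemma bilinVec_add_right (x y y') : bilinVec c x (y + y') = bilinVec c x y + bilinVec c x y' := by
  ext t; simp [bilinVec, mul_add, Finset.sum_add_distrib]

lemma bilinVec_sub_right (x y y') : bilinVec c x (y - y') = bilinVec c x y - bilinVec c x y' := by
  ext t; simp [bilinVec, mul_sub, Finset.sum_sub_distrib]

lemma bilinVec_single_single (a b) :
    bilinVec c (Pi.single a 1) (Pi.single b 1) = coeffVec c a b := by
  ext t; simp [bilinVec, coeffVec, Pi.single_apply]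

lemma IsSOSDecomp.apply_eq {P} (h : IsSOSDecomp m n R P c) (x y) :
    P x y = bilinVec c x y ⬝ᵥ bilinVec c x y := by
  simp [h x y, dotProduct, bilinVec, sq]

end Decomposition

namespace IsSOSDecomp

variable {A : Matrix (Fin m) (Fin n) ℝ} {c : Fin R → Fin m → Fin n → ℝ}
  (h : IsSOSDecomp m n R (diagBiquadForm A) c)
include h

lemma coeffVec_dotProduct_self (a : Fin m) (b : Fin n) :
    coeffVec c a b ⬝ᵥ coeffVec c a b = A a b := by
  have key := h.apply_eq (Pi.single a 1) (Pi.single b 1)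
  rw [bilinVec_single_single] at key
  simp [← key, diagBiquadForm, sq, ← Pi.single_mul]

lemma coeffVec_eq_zero_iff {a : Fin m} {b : Fin n} : coeffVec c a b = 0 ↔ A a b = 0 := by
  rw [← dotProduct_self_eq_zero, h.coeffVec_dotProduct_self]

lemma bilinVec_single_dotProduct_of_ne_right (x : Fin m → ℝ) {b b' : Fin n} (hb : b ≠ b') :
    bilinVec c x (Pi.single b 1) ⬝ᵥ bilinVec c x (Pi.single b' 1) = 0 := by
  apply dotProduct_eq_zero_of_add_self_eq_sub_self
  rw [← bilinVec_add_right, ← bilinVec_sub_right, ← h.apply_eq, ← h.apply_eq, diagBiquadForm,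
    diagBiquadForm, single_sub_single_sq hb]

lemma bilinVec_single_dotProduct_of_ne_left (y : Fin n → ℝ) {a a' : Fin m} (ha : a ≠ a') :
    bilinVec c (Pi.single a 1) y ⬝ᵥ bilinVec c (Pi.single a' 1) y = 0 := by
  apply dotProduct_eq_zero_of_add_self_eq_sub_self
  rw [← bilinVec_add_left, ← bilinVec_sub_left, ← h.apply_eq, ← h.apply_eq, diagBiquadForm,
    diagBiquadForm, single_sub_single_sq ha]

lemma coeffVec_dotProduct_add_swap (a a' : Fin m) {b b' : Fin n} (hb : b ≠ b') :
    coeffVec c a b ⬝ᵥ coeffVec c a' b' + coeffVec c a b' ⬝ᵥ coeffVec c a' b = 0 := by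
  have hadd := h.bilinVec_single_dotProduct_of_ne_right (Pi.single a 1 + Pi.single a' 1) hb
  have hsub := h.bilinVec_single_dotProduct_of_ne_right (Pi.single a 1 - Pi.single a' 1) hb
  simp only [bilinVec_add_left, bilinVec_sub_left, bilinVec_single_single, add_dotProduct,
    dotProduct_add, sub_dotProduct, dotProduct_sub] at hadd hsub
  linarith [dotProduct_comm (coeffVec c a b') (coeffVec c a' b)]

lemma coeffVec_dotProduct_eq_zero (hA : IsRectangleFree A) {a a' : Fin m} {b b' : Fin n}
    (hab : A a b ≠ 0) (hab' : A a' b' ≠ 0) (hne : (a, b) ≠ (a', b')) :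
    coeffVec c a b ⬝ᵥ coeffVec c a' b' = 0 := by
  rcases eq_or_ne a a' with rfl | ha
  · simpa [bilinVec_single_single] using
      h.bilinVec_single_dotProduct_of_ne_right (Pi.single a 1) (by simpa using hne)
  rcases eq_or_ne b b' with rfl | hb
  · simpa [bilinVec_single_single] using h.bilinVec_single_dotProduct_of_ne_left (Pi.single b 1) ha
  have hswap := h.coeffVec_dotProduct_add_swap a a' hb
  rcases hA ha hb hab hab' with h0 | h0
  · rwa [h.coeffVec_eq_zero_iff.2 h0, zero_dotProduct, add_zero] at hswap
  · rwa [h.coeffVec_eq_zero_iff.2 h0, dotProduct_zero, add_zero] at hswap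

theorem card_support_le (hA : IsRectangleFree A) :
    Fintype.card {p : Fin m × Fin n // A p.1 p.2 ≠ 0} ≤ R := by
  have hli : LinearIndependent ℝ fun p : {p : Fin m × Fin n // A p.1 p.2 ≠ 0} =>
      coeffVec c p.1.1 p.1.2 :=
    linearIndependent_of_dotProduct_eq_zero (fun p => h.coeffVec_eq_zero_iff.not.2 p.2)
      fun p q hpq => h.coeffVec_dotProduct_eq_zero hA p.2 q.2 (Subtype.coe_injective.ne hpq)
  simpa using hli.fintype_card_le_finrank

end IsSOSDecomp

theorem exists_isSOSDecomp_diagBiquadForm {A : Matrix (Fin m) (Fin n) ℝ}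
    (hA : ∀ i j, 0 ≤ A i j) :
    ∃ c, IsSOSDecomp m n (Fintype.card {p : Fin m × Fin n // A p.1 p.2 ≠ 0})
      (diagBiquadForm A) c := by
  set e := Fintype.equivFin {p : Fin m × Fin n // A p.1 p.2 ≠ 0}
  refine ⟨fun t i j => if (i, j) = (e.symm t).1 then √(A i j) else 0, fun x y => ?_⟩
  have hterm : ∀ t, ∑ i, ∑ j, (if (i, j) = (e.symm t).1 then √(A i j) else 0) * x i * y j =
      √(A (e.symm t).1.1 (e.symm t).1.2) * x (e.symm t).1.1 * y (e.symm t).1.2 := by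
    intro t
    rw [← Fintype.sum_prod_type']
    simp [ite_mul]
  set f : Fin m × Fin n → ℝ := fun p => A p.1 p.2 * x p.1 ^ 2 * y p.2 ^ 2
  calc diagBiquadForm A x y = ∑ p, f p := diagBiquadForm_eq_sum A x y
    _ = ∑ p : {p : Fin m × Fin n // A p.1 p.2 ≠ 0}, f p := by
      rw [← Finset.sum_subtype _ (fun _ => Finset.mem_filter_univ _)]
      exact (Finset.sum_filter_of_ne fun p _ hp =>
        left_ne_zero_of_mul (left_ne_zero_of_mul hp)).symm
    _ = _ := by
      rw [← e.symm.sum_comp]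
      simp only [hterm, mul_pow, Real.sq_sqrt (hA _ _), f]

lemma sosRank_eq_of_forall_le {P : (Fin m → ℝ) → (Fin n → ℝ) → ℝ} {N : ℕ}
    (hex : ∃ c, IsSOSDecomp m n N P c) (hle : ∀ R c, IsSOSDecomp m n R P c → N ≤ R) :
    sosRank m n P = N :=
  IsLeast.csInf_eq ⟨hex, fun R ⟨c, hc⟩ => hle R c hc⟩

theorem sosRank_diagBiquadForm {A : Matrix (Fin m) (Fin n) ℝ} (hA₀ : ∀ i j, 0 ≤ A i j)
    (hA : IsRectangleFree A) :
    sosRank m n (diagBiquadForm A) = Fintype.card {p : Fin m × Fin n // A p.1 p.2 ≠ 0} :=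
  sosRank_eq_of_forall_le (exists_isSOSDecomp_diagBiquadForm hA₀)
    fun _ _ h => h.card_support_le hA

section PermMatrix

variable (σ : Equiv.Perm (Fin m))

lemma one_add_permMatrix_apply (i j : Fin m) :
    (1 + σ.permMatrix ℝ) i j = (if j = i then 1 else 0) + if j = σ i then 1 else 0 := by
  simp [Matrix.one_apply, eq_comm]

lemma one_add_permMatrix_nonneg (i j : Fin m) : 0 ≤ (1 + σ.permMatrix ℝ) i j := by
  rw [one_add_permMatrix_apply]
  positivity

variable {σ}

lemma one_add_permMatrix_ne_zero_iff {i j : Fin m} :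
    (1 + σ.permMatrix ℝ) i j ≠ 0 ↔ j = i ∨ j = σ i := by
  rw [one_add_permMatrix_apply]
  split_ifs <;> simp_all

lemma isRectangleFree_one_add_permMatrix (hσ : ∀ i, σ (σ i) ≠ i) :
    IsRectangleFree (1 + σ.permMatrix ℝ) := by
  intro a a' b b' ha hb hab hab'
  by_contra! hswap
  simp only [one_add_permMatrix_ne_zero_iff] at hab hab' hswap
  grind

lemma card_support_one_add_permMatrix (hσ : ∀ i, σ i ≠ i) :
    Fintype.card {p : Fin m × Fin m // (1 + σ.permMatrix ℝ) p.1 p.2 ≠ 0} = 2 * m := by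
  let f : Fin m ⊕ Fin m → {p : Fin m × Fin m // (1 + σ.permMatrix ℝ) p.1 p.2 ≠ 0} :=
    Sum.elim (fun i => ⟨(i, i), one_add_permMatrix_ne_zero_iff.2 (.inl rfl)⟩)
      (fun i => ⟨(i, σ i), one_add_permMatrix_ne_zero_iff.2 (.inr rfl)⟩)
  have hf : Function.Bijective f := by
    refine ⟨?_, ?_⟩
    · rintro (i | i) (j | j) h <;> simp only [f, Sum.elim_inl, Sum.elim_inr, Subtype.mk.injEq,
        Prod.mk.injEq, Sum.inl.injEq, Sum.inr.injEq, reduceCtorEq] at h ⊢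
      · exact h.1
      · exact hσ j (h.1 ▸ h.2).symm
      · exact hσ i (h.1 ▸ h.2)
      · exact h.1
    · rintro ⟨⟨i, j⟩, hij⟩
      rcases one_add_permMatrix_ne_zero_iff.1 (show (1 + σ.permMatrix ℝ) i j ≠ 0 from hij)
        with rfl | rfl
      exacts [⟨.inl j, rfl⟩, ⟨.inr i, rfl⟩]
  rw [← Fintype.card_congr (Equiv.ofBijective f hf), Fintype.card_sum, Fintype.card_fin, two_mul]

end PermMatrix

lemma finRotate_eq_mk_mod (hm : 0 < m) (i : Fin m) :
    finRotate m i = ⟨(i.val + 1) % m, Nat.mod_lt _ hm⟩ := by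
  ext
  rw [finRotate_apply]
  simp [Fin.val_add]

lemma finRotate_finRotate_ne_self (hm : 3 ≤ m) (i : Fin m) :
    finRotate m (finRotate m i) ≠ i := by
  have : NeZero m := ⟨by omega⟩
  rw [finRotate_apply, finRotate_apply, add_assoc, Ne, add_eq_left, Fin.ext_iff, Fin.val_add,
    Fin.val_one', Nat.mod_eq_of_lt (by omega : 1 < m), Nat.mod_eq_of_lt (by omega : 1 + 1 < m)]
  simp

lemma Pcyclic_eq_diagBiquadForm (hm : 0 < m) :
    Pcyclic m hm = diagBiquadForm (1 + (finRotate m).permMatrix ℝ) := by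
  ext x y
  simp only [Pcyclic, diagBiquadForm, add_mulVec, one_mulVec, PEquiv.toMatrix_toPEquiv_mulVec,
    dotProduct, ← finRotate_eq_mk_mod hm, Pi.pow_apply, Pi.add_apply, Function.comp_apply,
    mul_add, Finset.sum_add_distrib]

/-- any SOS decomposition of `P_{m,m,2m}` uses at least `2m`
squares; consequently its SOS rank is exactly `2m`. -/
theorem Pcyclic_sosRank (m : ℕ) (hm : 3 ≤ m) :
    (∀ (R : ℕ) (c : Fin R → Fin m → Fin m → ℝ),
        IsSOSDecomp m m R (Pcyclic m (by omega)) c → 2 * m ≤ R) ∧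
    sosRank m m (Pcyclic m (by omega)) = 2 * m := by
  have hσ₂ := finRotate_finRotate_ne_self hm
  have hσ₁ : ∀ i, finRotate m i ≠ i := fun i h => hσ₂ i (by rw [h, h])
  have hfree := isRectangleFree_one_add_permMatrix hσ₂
  rw [Pcyclic_eq_diagBiquadForm, ← card_support_one_add_permMatrix hσ₁]
  exact ⟨fun _ _ h => h.card_support_le hfree,
    sosRank_diagBiquadForm (one_add_permMatrix_nonneg _) hfree⟩
end

section
/- Suppose a biquadratic form P(x,y) in x ∈ ℝ^m, y ∈ ℝ^n equals Σ_{t=1}^R L_t(x,y)² with L_t(x,y) = Σ_{i,j} c_{ij}^{(t)} x_i y_j, and suppose the support set S = {(i,j) : coefficient of x_i²y_j² in P is 1, all other monomial coefficients 0} has the property that for any distinct (i,j),(p,q) ∈ S with i ≠ p, j ≠ q, at least one of (i,q), (p,j) is not in S. Then the vectors C_{ij} = (c_{ij}^{(1)},…,c_{ij}^{(R)}) for (i,j) ∈ S form an orthonormal family in ℝ^R, and hence R ≥ |S|. -/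
/-!
Evaluating the identity at indicator vectors `x = 𝟙_A`, `y = 𝟙_B` with `|A|, |B| ≤ 2` reads off
the Gram matrix of the vectors `C_{ij}`: `‖C_{ij}‖²` is the indicator of `S`, `C_{ij} ⊥ C_{iq}`,
`C_{ij} ⊥ C_{pj}`, and `⟨C_{ij}, C_{pq}⟩ + ⟨C_{iq}, C_{pj}⟩ = 0`. Off `S` the vectors vanish, so
the rectangle condition kills the second term of the last relation. An orthonormal family in
`ℝ^R` has at most `R` members.
-/

open Finset

def IsBilinearSumSq {ι κ τ : Type*} [Fintype ι] [Fintype κ] [Fintype τ]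
    (S : Finset (ι × κ)) (c : τ → ι → κ → ℝ) : Prop :=
  ∀ (x : ι → ℝ) (y : κ → ℝ),
    ∑ p ∈ S, x p.1 ^ 2 * y p.2 ^ 2 = ∑ t, (∑ i, ∑ j, c t i j * x i * y j) ^ 2

namespace IsBilinearSumSq

variable {ι κ τ : Type*} [Fintype ι] [Fintype κ] [Fintype τ] [DecidableEq ι] [DecidableEq κ]
  {S : Finset (ι × κ)} {c : τ → ι → κ → ℝ}

theorem sum_indicator_eq (h : IsBilinearSumSq S c) (A : Finset ι) (B : Finset κ) :
    ∑ a ∈ A, ∑ b ∈ B, (if (a, b) ∈ S then 1 else 0 : ℝ) =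
      ∑ t, (∑ a ∈ A, ∑ b ∈ B, c t a b) ^ 2 := by
  let x : ι → ℝ := fun a => if a ∈ A then 1 else 0
  let y : κ → ℝ := fun b => if b ∈ B then 1 else 0
  have hform : ∑ p ∈ S, x p.1 ^ 2 * y p.2 ^ 2 = ∑ a ∈ A, ∑ b ∈ B, if (a, b) ∈ S then 1 else 0 :=
    calc ∑ p ∈ S, x p.1 ^ 2 * y p.2 ^ 2 = ∑ p ∈ S, if p ∈ A ×ˢ B then 1 else 0 :=
          sum_congr rfl fun p _ => by simp only [x, y, mem_product, ite_and]; split_ifs <;> norm_num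
      _ = ∑ p ∈ A ×ˢ B, if p ∈ S then 1 else 0 := by rw [sum_ite_mem, sum_ite_mem, inter_comm]
      _ = _ := sum_product _ _ _
  have hlin (t : τ) : ∑ i, ∑ j, c t i j * x i * y j = ∑ a ∈ A, ∑ b ∈ B, c t a b := by
    simp only [x, y, mul_ite, mul_one, mul_zero, Fintype.sum_ite_mem, sum_ite_irrel, sum_const_zero]
  rw [← hform, h x y]
  simp_rw [hlin]

theorem sum_sq_eq (h : IsBilinearSumSq S c) (i : ι) (j : κ) :
    ∑ t, c t i j ^ 2 = if (i, j) ∈ S then 1 else 0 := by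
  simpa only [sum_singleton] using (h.sum_indicator_eq {i} {j}).symm

theorem apply_eq_zero_of_notMem (h : IsBilinearSumSq S c) {i : ι} {j : κ} (hij : (i, j) ∉ S)
    (t : τ) : c t i j = 0 := by
  have hsum : ∑ t, c t i j ^ 2 = 0 := by rw [h.sum_sq_eq, if_neg hij]
  exact pow_eq_zero_iff two_ne_zero |>.mp <|
    (sum_eq_zero_iff_of_nonneg fun t _ => sq_nonneg (c t i j)).mp hsum t (mem_univ t)

theorem sum_mul_eq_zero_of_fst_eq (h : IsBilinearSumSq S c) (i : ι) {j q : κ} (hjq : j ≠ q) :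
    ∑ t, c t i j * c t i q = 0 := by
  have hpair := h.sum_indicator_eq {i} {j, q}
  simp only [sum_singleton, sum_pair hjq, add_sq, sum_add_distrib, mul_assoc, ← mul_sum,
    ← h.sum_sq_eq] at hpair
  linarith

theorem sum_mul_eq_zero_of_snd_eq (h : IsBilinearSumSq S c) {i p : ι} (hip : i ≠ p) (j : κ) :
    ∑ t, c t i j * c t p j = 0 := by
  have hpair := h.sum_indicator_eq {i, p} {j}
  simp only [sum_singleton, sum_pair hip, add_sq, sum_add_distrib, mul_assoc, ← mul_sum,
    ← h.sum_sq_eq] at hpair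
  linarith

theorem sum_mul_add_sum_mul_eq_zero (h : IsBilinearSumSq S c) {i p : ι} {j q : κ}
    (hip : i ≠ p) (hjq : j ≠ q) :
    ∑ t, c t i j * c t p q + ∑ t, c t i q * c t p j = 0 := by
  have hsquare := h.sum_indicator_eq {i, p} {j, q}
  have hexp (t : τ) : (c t i j + c t i q + (c t p j + c t p q)) ^ 2
      = c t i j ^ 2 + c t i q ^ 2 + c t p j ^ 2 + c t p q ^ 2
        + 2 * (c t i j * c t i q) + 2 * (c t p j * c t p q)
        + 2 * (c t i j * c t p j) + 2 * (c t i q * c t p q)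
        + 2 * (c t i j * c t p q) + 2 * (c t i q * c t p j) := by ring
  simp only [sum_pair hip, sum_pair hjq, hexp, sum_add_distrib, ← mul_sum, ← h.sum_sq_eq,
    h.sum_mul_eq_zero_of_fst_eq _ hjq, h.sum_mul_eq_zero_of_snd_eq hip] at hsquare
  linarith

theorem sum_mul_eq_zero_of_ne (h : IsBilinearSumSq S c) {a b : ι × κ} (hab : a ≠ b)
    (hrect : a.1 ≠ b.1 → a.2 ≠ b.2 → (a.1, b.2) ∉ S ∨ (b.1, a.2) ∉ S) :
    ∑ t, c t a.1 a.2 * c t b.1 b.2 = 0 := by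
  obtain ⟨i, j⟩ := a
  obtain ⟨p, q⟩ := b
  rcases eq_or_ne i p with rfl | hip
  · exact h.sum_mul_eq_zero_of_fst_eq i fun hjq => hab (Prod.ext rfl hjq)
  rcases eq_or_ne j q with rfl | hjq
  · exact h.sum_mul_eq_zero_of_snd_eq hip j
  have hcross : ∑ t, c t i q * c t p j = 0 := by
    rcases hrect hip hjq with hiq | hpj
    · simp [h.apply_eq_zero_of_notMem hiq]
    · simp [h.apply_eq_zero_of_notMem hpj]
  linarith [h.sum_mul_add_sum_mul_eq_zero hip hjq]

end IsBilinearSumSq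

theorem Finset.card_le_card_of_sum_mul_eq_ite {α τ : Type*} [DecidableEq α] [Fintype τ]
    (s : Finset α) (v : α → τ → ℝ)
    (hv : ∀ a ∈ s, ∀ b ∈ s, ∑ t, v a t * v b t = if a = b then 1 else 0) :
    #s ≤ Fintype.card τ := by
  let w : s → EuclideanSpace ℝ τ := fun a => WithLp.toLp 2 (v a)
  have hw : Orthonormal ℝ w := by
    rw [orthonormal_iff_ite]
    intro a b
    simp only [w, PiLp.inner_apply, RCLike.inner_apply, conj_trivial, Subtype.ext_iff]
    simp_rw [mul_comm (v b _)]
    exact hv a a.2 b b.2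
  simpa [finrank_euclideanSpace] using hw.linearIndependent.fintype_card_le_finrank

/-- if a simple biquadratic form with support `S` satisfying the
rectangle-avoidance property is a sum of `R` squares of bilinear forms, then the
coefficient vectors `C_{ij} = (c_{ij}^{(1)},…,c_{ij}^{(R)})` for `(i,j) ∈ S`
form an orthonormal family in `ℝ^R`, and hence `R ≥ |S|`. -/
theorem support_property_orthonormal (m n R : ℕ) (S : Finset (Fin m × Fin n))
    (hrect : ∀ (i p : Fin m) (j q : Fin n), (i, j) ∈ S → (p, q) ∈ S →
      (i, j) ≠ (p, q) → i ≠ p → j ≠ q → (i, q) ∉ S ∨ (p, j) ∉ S)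
    (c : Fin R → Fin m → Fin n → ℝ)
    (hdec : ∀ (x : Fin m → ℝ) (y : Fin n → ℝ),
      (∑ p ∈ S, (x p.1)^2 * (y p.2)^2) = ∑ t, (∑ i, ∑ j, c t i j * x i * y j)^2) :
    (∀ p ∈ S, ∑ t, (c t p.1 p.2)^2 = 1) ∧
    (∀ p ∈ S, ∀ q ∈ S, p ≠ q → ∑ t, c t p.1 p.2 * c t q.1 q.2 = 0) ∧
    S.card ≤ R := by
  have h : IsBilinearSumSq S c := hdec
  have hnorm : ∀ p ∈ S, ∑ t, c t p.1 p.2 ^ 2 = 1 := fun p hp => by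
    rw [h.sum_sq_eq, if_pos hp]
  have horth : ∀ p ∈ S, ∀ q ∈ S, p ≠ q → ∑ t, c t p.1 p.2 * c t q.1 q.2 = 0 :=
    fun p hp q hq hpq => h.sum_mul_eq_zero_of_ne hpq (hrect _ _ _ _ hp hq hpq)
  refine ⟨hnorm, horth, ?_⟩
  have hcard := S.card_le_card_of_sum_mul_eq_ite (fun p t => c t p.1 p.2) fun p hp q hq => by
    split_ifs with hpq
    · subst hpq
      simpa only [sq] using hnorm p hp
    · exact horth p hp q hq hpq
  simpa using hcard
end

section
/- Let P(x,y) be a biquadratic form in x ∈ ℝ^m, y ∈ ℝ^n with minimal SOS rank R, and define P₊(x, y, y_{n+1}) = P(x,y) + x₁² y_{n+1}². Then the SOS rank of P₊ (as a biquadratic form in x ∈ ℝ^m and (y, y_{n+1}) ∈ ℝ^{n+1}) is exactly R + 1. -/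
open Matrix

lemma isSOSDecomp_iff {m n R : ℕ} {P : (Fin m → ℝ) → (Fin n → ℝ) → ℝ}
    {c : Fin R → Matrix (Fin m) (Fin n) ℝ} :
    IsSOSDecomp m n R P c ↔ ∀ x y, P x y = ∑ t, (x ⬝ᵥ (c t *ᵥ y)) ^ 2 := by
  have h (t) (x : Fin m → ℝ) (y : Fin n → ℝ) : ∑ i, ∑ j, c t i j * x i * y j = x ⬝ᵥ (c t *ᵥ y) := by
    simp only [dotProduct, mulVec, Finset.mul_sum]
    exact Finset.sum_congr rfl fun i _ => Finset.sum_congr rfl fun j _ => by ring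
  simp only [IsSOSDecomp, h]

lemma dotProduct_sum_smul_mulVec {ι m n R : Type*} [Fintype ι] [Fintype m] [Fintype n]
    [CommSemiring R] (a : ι → R) (c : ι → Matrix m n R) (x : m → R) (y : n → R) :
    x ⬝ᵥ ((∑ t, a t • c t) *ᵥ y) = ∑ t, a t * (x ⬝ᵥ (c t *ᵥ y)) := by
  simp [sum_mulVec, smul_mulVec, dotProduct_sum, dotProduct_smul]

lemma dotProduct_mulVec_snoc {m n : ℕ} (c : Matrix (Fin m) (Fin (n+1)) ℝ) (x : Fin m → ℝ)
    (y : Fin n → ℝ) (s : ℝ) :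
    x ⬝ᵥ (c *ᵥ Fin.snoc y s) =
      x ⬝ᵥ (c.submatrix id Fin.castSucc *ᵥ y) + (x ⬝ᵥ fun i => c i (Fin.last n)) * s := by
  simp only [dotProduct, mulVec, Fin.sum_univ_castSucc, Fin.snoc_castSucc, Fin.snoc_last,
    submatrix_apply, id, mul_add, Finset.sum_add_distrib, Finset.sum_mul]
  exact congrArg _ (Finset.sum_congr rfl fun i _ => by ring)

lemma dotProduct_of_snoc_mulVec_snoc {m n : ℕ} (M : Matrix (Fin m) (Fin n) ℝ) (v x : Fin m → ℝ)
    (y : Fin n → ℝ) (s : ℝ) :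
    x ⬝ᵥ ((of fun i => Fin.snoc (M i) (v i) : Matrix (Fin m) (Fin (n+1)) ℝ) *ᵥ Fin.snoc y s) =
      x ⬝ᵥ (M *ᵥ y) + (x ⬝ᵥ v) * s := by
  have hM : (of fun i => Fin.snoc (M i) (v i) : Matrix (Fin m) (Fin (n+1)) ℝ).submatrix id
      Fin.castSucc = M := by
    ext; simp
  simp [dotProduct_mulVec_snoc, hM]

lemma coeffs_eq_of_forall_add_mul_sq_eq_sum_sq {ι : Type*} [Fintype ι] {a b : ℝ} {u v : ι → ℝ}
    (h : ∀ s : ℝ, a + b * s ^ 2 = ∑ t, (u t + v t * s) ^ 2) :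
    a = ∑ t, u t ^ 2 ∧ b = ∑ t, v t ^ 2 ∧ ∑ t, u t * v t = 0 := by
  have expand (s : ℝ) : ∑ t, (u t + v t * s) ^ 2 =
      ∑ t, u t ^ 2 + 2 * s * ∑ t, u t * v t + s ^ 2 * ∑ t, v t ^ 2 := by
    simp only [Finset.mul_sum, ← Finset.sum_add_distrib]
    exact Finset.sum_congr rfl fun t _ => by ring
  have h₀ := h 0
  have h₁ := h 1
  have h₂ := h (-1)
  rw [expand] at h₀ h₁ h₂
  exact ⟨by linarith, by linarith, by linarith⟩

def addNewSquare {m n : ℕ} (P : (Fin (m+1) → ℝ) → (Fin n → ℝ) → ℝ) :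
    (Fin (m+1) → ℝ) → (Fin (n+1) → ℝ) → ℝ :=
  fun x y => P x (fun j => y j.castSucc) + (x 0)^2 * (y (Fin.last n))^2

lemma IsSOSDecomp.addNewSquare_coeffs {m n S : ℕ} {P : (Fin (m+1) → ℝ) → (Fin n → ℝ) → ℝ}
    {c : Fin S → Matrix (Fin (m+1)) (Fin (n+1)) ℝ}
    (h : IsSOSDecomp (m+1) (n+1) S (addNewSquare P) c) (x : Fin (m+1) → ℝ) (y : Fin n → ℝ) :
    P x y = ∑ t, (x ⬝ᵥ ((c t).submatrix id Fin.castSucc *ᵥ y)) ^ 2 ∧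
    x 0 ^ 2 = ∑ t, (x ⬝ᵥ fun i => c t i (Fin.last n)) ^ 2 ∧
    ∑ t, (x ⬝ᵥ ((c t).submatrix id Fin.castSucc *ᵥ y)) * (x ⬝ᵥ fun i => c t i (Fin.last n)) =
      0 := by
  refine coeffs_eq_of_forall_add_mul_sq_eq_sum_sq fun s => ?_
  simpa [addNewSquare, dotProduct_mulVec_snoc] using isSOSDecomp_iff.1 h x (Fin.snoc y s)

lemma forall_dotProduct_eq_of_sum_sq_eq_sq {ι κ : Type*} [Fintype ι] [Fintype κ] [DecidableEq κ]
    {k : κ} {N : ι → κ → ℝ} (h : ∀ x, x k ^ 2 = ∑ t, (x ⬝ᵥ N t) ^ 2) :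
    (∀ t x, x ⬝ᵥ N t = N t k * x k) ∧ ∑ t, N t k ^ 2 = 1 := by
  have hN (t : ι) (i : κ) (hi : i ≠ k) : N t i = 0 := by
    have h0 : ∑ t, N t i ^ 2 = 0 := by
      simpa [single_dotProduct, hi.symm] using (h (Pi.single i 1)).symm
    exact pow_eq_zero_iff two_ne_zero |>.1 <|
      (Finset.sum_eq_zero_iff_of_nonneg fun t _ => sq_nonneg (N t i)).1 h0 t (Finset.mem_univ t)
  refine ⟨fun t x => ?_, by simpa [single_dotProduct] using (h (Pi.single k 1)).symm⟩
  rw [dotProduct, Finset.sum_eq_single k (fun i _ hi => by rw [hN t i hi, mul_zero]) (by simp)]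
  ring

lemma eq_zero_of_forall_mul_dotProduct_eq_zero {κ : Type*} [Fintype κ] [DecidableEq κ] {k : κ}
    {a : κ → ℝ} (h : ∀ x, x k * (x ⬝ᵥ a) = 0) : a = 0 := by
  ext i
  have h₀ := h (Pi.single k 1)
  have h₁ := h (Pi.single i 1 + Pi.single k 1)
  by_cases hi : i = k <;> simp_all [add_dotProduct, single_dotProduct]

-- `f` is the reflection exchanging `l` with the last basis vector, followed by dropping that
-- coordinate.
lemma exists_linearMap_sum_sq_eq {S : ℕ} (l : Fin (S+1) → ℝ) (hl : ∑ t, l t ^ 2 = 1) :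
    ∃ f : (Fin (S+1) → ℝ) →ₗ[ℝ] (Fin S → ℝ),
      ∀ u, ∑ t, u t ^ 2 = ∑ s, f u s ^ 2 + (l ⬝ᵥ u) ^ 2 := by
  let e := WithLp.linearEquiv 2 ℝ (Fin (S+1) → ℝ)
  let v : EuclideanSpace ℝ (Fin (S+1)) := WithLp.toLp 2 l
  let w : EuclideanSpace ℝ (Fin (S+1)) := EuclideanSpace.single (Fin.last S) 1
  have hvw : ‖v‖ = ‖w‖ := by
    rw [PiLp.norm_single, norm_one, EuclideanSpace.norm_eq]
    simp [v, hl]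
  let ρ := (ℝ ∙ (v - w))ᗮ.reflection
  have hρ : ρ v = w := Submodule.reflection_sub hvw
  refine ⟨LinearMap.funLeft ℝ ℝ Fin.castSucc ∘ₗ e.toLinearMap ∘ₗ ρ.toLinearMap ∘ₗ
    e.symm.toLinearMap, fun u => ?_⟩
  have hlast : ρ (WithLp.toLp 2 u) (Fin.last S) = l ⬝ᵥ u := by
    have : inner ℝ w (ρ (WithLp.toLp 2 u)) = ρ (WithLp.toLp 2 u) (Fin.last S) := by
      simp [w, EuclideanSpace.inner_single_left]
    rw [← this, ← hρ, ρ.inner_map_map, EuclideanSpace.inner_eq_star_dotProduct]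
    simp [v, dotProduct_comm]
  have hnorm : ∑ t, u t ^ 2 = ∑ t, ρ (WithLp.toLp 2 u) t ^ 2 := by
    have h := congrArg (· ^ 2) (ρ.norm_map (WithLp.toLp 2 u)).symm
    simp only [EuclideanSpace.norm_sq_eq, Real.norm_eq_abs, sq_abs] at h
    exact h
  rw [hnorm, Fin.sum_univ_castSucc, hlast]
  rfl

lemma IsSOSDecomp.exists_of_forall_sum_mul_eq_zero {m n S : ℕ} {P : (Fin m → ℝ) → (Fin n → ℝ) → ℝ}
    {c : Fin (S+1) → Matrix (Fin m) (Fin n) ℝ} (hc : IsSOSDecomp m n (S+1) P c)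
    (l : Fin (S+1) → ℝ) (hl : ∑ t, l t ^ 2 = 1)
    (horth : ∀ x y, ∑ t, l t * (x ⬝ᵥ (c t *ᵥ y)) = 0) :
    ∃ c' : Fin S → Matrix (Fin m) (Fin n) ℝ, IsSOSDecomp m n S P c' := by
  obtain ⟨f, hf⟩ := exists_linearMap_sum_sq_eq l hl
  refine ⟨fun s => ∑ t, LinearMap.toMatrix' f s t • c t, isSOSDecomp_iff.2 fun x y => ?_⟩
  have hcomp (s : Fin S) : x ⬝ᵥ ((∑ t, LinearMap.toMatrix' f s t • c t) *ᵥ y) =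
      f (fun t => x ⬝ᵥ (c t *ᵥ y)) s := by
    rw [dotProduct_sum_smul_mulVec, ← LinearMap.toMatrix'_mulVec]
    rfl
  simp only [hcomp]
  rw [isSOSDecomp_iff.1 hc, hf, dotProduct, horth, sq, mul_zero, add_zero]

lemma IsSOSDecomp.sosRank_lt_of_addNewSquare {m n S : ℕ} {P : (Fin (m+1) → ℝ) → (Fin n → ℝ) → ℝ}
    {c : Fin S → Matrix (Fin (m+1)) (Fin (n+1)) ℝ}
    (h : IsSOSDecomp (m+1) (n+1) S (addNewSquare P) c) : sosRank (m+1) n P < S := by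
  set M := fun t => (c t).submatrix id Fin.castSucc
  set N := fun t i => c t i (Fin.last n)
  obtain ⟨hN, hl⟩ :=
    forall_dotProduct_eq_of_sum_sq_eq_sq (k := 0) (N := N) fun x => (h.addNewSquare_coeffs x 0).2.1
  cases S with
  | zero => simp at hl
  | succ S =>
    have hP : IsSOSDecomp (m+1) n (S+1) P M :=
      isSOSDecomp_iff.2 fun x y => (h.addNewSquare_coeffs x y).1
    have horth (x y) : ∑ t, N t 0 * (x ⬝ᵥ (M t *ᵥ y)) = 0 := by
      have hzero : (∑ t, N t 0 • M t) *ᵥ y = 0 :=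
        eq_zero_of_forall_mul_dotProduct_eq_zero (k := 0) fun x => by
          rw [dotProduct_sum_smul_mulVec, Finset.mul_sum, ← (h.addNewSquare_coeffs x y).2.2]
          exact Finset.sum_congr rfl fun t _ => by rw [hN]; ring
      rw [← dotProduct_sum_smul_mulVec, hzero, dotProduct_zero]
    exact Nat.lt_succ_of_le (Nat.sInf_le (hP.exists_of_forall_sum_mul_eq_zero _ hl horth))

lemma IsSOSDecomp.exists_addNewSquare {m n R : ℕ} {P : (Fin (m+1) → ℝ) → (Fin n → ℝ) → ℝ}
    {c : Fin R → Matrix (Fin (m+1)) (Fin n) ℝ} (hc : IsSOSDecomp (m+1) n R P c) :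
    ∃ c' : Fin (R+1) → Matrix (Fin (m+1)) (Fin (n+1)) ℝ,
      IsSOSDecomp (m+1) (n+1) (R+1) (addNewSquare P) c' := by
  -- The zero block is written `0 i` so that `dotProduct_of_snoc_mulVec_snoc` matches it.
  refine ⟨Fin.snoc (fun t => of fun i => Fin.snoc (c t i) 0)
    (of fun i => Fin.snoc ((0 : Matrix (Fin (m+1)) (Fin n) ℝ) i)
      ((Pi.single 0 1 : Fin (m+1) → ℝ) i)),
    isSOSDecomp_iff.2 fun x y => ?_⟩
  rw [← Fin.snoc_init_self y]
  simp only [addNewSquare, Fin.snoc_castSucc, Fin.snoc_last, Fin.sum_univ_castSucc,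
    dotProduct_of_snoc_mulVec_snoc, isSOSDecomp_iff.1 hc]
  simp [mul_pow]

/-- if `P` is a biquadratic form with minimal SOS rank `R`, then
`P₊(x, y, y_{n+1}) = P(x,y) + x₁² y_{n+1}²` has SOS rank exactly `R + 1`. -/
theorem sosRank_add_new_square (m n : ℕ) (P : (Fin (m+1) → ℝ) → (Fin n → ℝ) → ℝ)
    (R : ℕ) (hR : R = sosRank (m+1) n P)
    (hsos : ∃ c : Fin R → Fin (m+1) → Fin n → ℝ, IsSOSDecomp (m+1) n R P c) :
    sosRank (m+1) (n+1)
      (fun x y => P x (fun j => y j.castSucc) + (x 0)^2 * (y (Fin.last n))^2)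
      = R + 1 := by
  obtain ⟨c, hc⟩ := hsos
  have hmem := hc.exists_addNewSquare
  refine le_antisymm (Nat.sInf_le hmem) (le_csInf ⟨_, hmem⟩ fun S ⟨c', hc'⟩ => ?_)
  exact hR ▸ hc'.sosRank_lt_of_addNewSquare
end
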